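/- For every n ≥ 1 and every r with 1 ≤ r ≤ n, the number of increasing plane trees with n edges whose root has exactly r children equals the number of Stirling permutations of the multiset {1,1,2,2,...,n,n} having exactly r blocks. -/

import Mathlib

/-- A plane tree with labeled vertices: a root label together with an ordered
list of child subtrees.  (A plane tree is a rooted tree in which the children
of each node are linearly ordered.) -/
inductive LTree : Type where
  | node : ℕ → List LTree → LTree

namespace LTree

/-- The label of the root. -/
def rootLabel : LTree → ℕ
  | node a _ => a

/-- The list of child subtrees of the root. -/
def children : LTree → List LTree
  | node _ cs => cs

/-- `deg_T(root)`: the number of children of the root. -/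
def rootDeg (t : LTree) : ℕ := (children t).length

mutual
  /-- The list of all vertex labels of a tree. -/
  def labels : LTree → List ℕ
    | node a cs => a :: labelsList cs
  /-- The list of all vertex labels of a forest. -/
  def labelsList : List LTree → List ℕ
    | [] => []
    | c :: rest => labels c ++ labelsList rest
end

/-- `β(v)`: the smallest label occurring in the subtree `t` rooted at `v`. -/
def minLabel (t : LTree) : ℕ := (labels t).foldr min (rootLabel t)

/-- `min { j, β(c₁), …, β(cₖ) }` for a vertex `j` and a list of subtrees `c₁, …, cₖ`. -/
def minOver (j : ℕ) (rest : List LTree) : ℕ := (rest.map minLabel).foldr min j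

mutual
  /-- The list of edges of a tree, each recorded as a (parent label, child label)
  pair, in depth-first order. -/
  def edgeList : LTree → List (ℕ × ℕ)
    | node a cs => edgeListAux a cs
  def edgeListAux : ℕ → List LTree → List (ℕ × ℕ)
    | _, [] => []
    | a, c :: rest => (a, rootLabel c) :: (edgeList c ++ edgeListAux a rest)
end

mutual
  /-- The list of improper edges of a tree: if a vertex `j` has children
  `j₁, …, jₖ` (ordered left to right), the edge `(j, jᵢ)` is improper when
  `β(jᵢ) < min { j, β(j_{i+1}), …, β(jₖ) }`. -/
  def improperEdges : LTree → List (ℕ × ℕ)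
    | node a cs => improperEdgesAux a cs
  def improperEdgesAux : ℕ → List LTree → List (ℕ × ℕ)
    | _, [] => []
    | j, c :: rest =>
        (if minLabel c < minOver j rest then [(j, rootLabel c)] else [])
          ++ improperEdges c ++ improperEdgesAux j rest
end

mutual
  /-- The list of proper (i.e. non-improper) edges of a tree. -/
  def properEdges : LTree → List (ℕ × ℕ)
    | node a cs => properEdgesAux a cs
  def properEdgesAux : ℕ → List LTree → List (ℕ × ℕ)
    | _, [] => []
    | j, c :: rest =>
        (if minLabel c < minOver j rest then [] else [(j, rootLabel c)])
          ++ properEdges c ++ properEdgesAux j rest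
end

/-- `impr T`: the number of improper edges of `T`. -/
def impr (t : LTree) : ℕ := (improperEdges t).length

/-- `prop T`: the number of proper edges of `T`. -/
def propCount (t : LTree) : ℕ := (properEdges t).length

/-- The number of edges of `T`. -/
def edgeCount (t : LTree) : ℕ := (edgeList t).length

/-- `T` is a labeled plane tree with `n` edges: its `n + 1` vertices are labeled
bijectively with `{1, 2, …, n + 1}`. -/
def IsLPT (n : ℕ) (t : LTree) : Prop := (labels t).Perm (List.range' 1 (n + 1))

/-- `T` is increasing: vertex labels increase along every path from the root. -/
inductive Increasing : LTree → Prop where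
  | node (a : ℕ) (cs : List LTree) :
      (∀ c ∈ cs, a < rootLabel c) → (∀ c ∈ cs, Increasing c) → Increasing (node a cs)

end LTree

/-- `σ` is a Stirling permutation on the multiset `[n]₂ = {1,1,2,2,…,n,n}`: it is a
rearrangement of `[n]₂` such that for every `i`, all entries lying between the two
occurrences of `i` are greater than `i`. -/
def IsStirling (n : ℕ) (σ : List ℕ) : Prop :=
  σ.Perm (List.range' 1 n ++ List.range' 1 n) ∧
  ∀ p q r : ℕ, p < q → q < r → r < σ.length →
    σ.getD p 0 = σ.getD r 0 → σ.getD p 0 < σ.getD q 0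

/-- Position `q` starts a block of `σ`: every pair of equal entries occurring at
positions `p < r` with `p` before `q` also has `r` before `q`, i.e. `q` is not
contained in (nor is the right endpoint of) any substring `σ_p ⋯ σ_r` with
`σ_p = σ_r` starting before `q`.  Blocks are the maximal substrings with equal
endpoints; they begin exactly at such positions. -/
def IsBlockStart (σ : List ℕ) (q : ℕ) : Prop :=
  q < σ.length ∧
    ¬ ∃ p r : ℕ, p < q ∧ q ≤ r ∧ r < σ.length ∧ σ.getD p 0 = σ.getD r 0

/-- The number of blocks of a Stirling permutation `σ`. -/
noncomputable def blockCount (σ : List ℕ) : ℕ :=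
  Nat.card {q : ℕ // IsBlockStart σ q}

/-!
Removing the root (label `1`) of an increasing plane tree leaves a forest, which is read
depth-first: a vertex labelled `a` writes the letter `a - 1` when its subtree is entered and again
when it is left. Every letter occurs twice, and whatever lies between the two copies of `b` comes
from the subtree of `b`, hence is larger: the word is a Stirling permutation of `[n]₂`, and each
subtree of the root yields exactly one block. Conversely, the first letter of a Stirling
permutation and its second occurrence enclose the word of the first subtree, so the forest can be
read back recursively. The Stirling condition and the number of blocks both behave additively
under concatenation of words with disjoint letters, which turns every step into a structural
induction.
-/

def StirlingCondition (σ : List ℕ) : Prop :=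
  ∀ p q r : ℕ, p < q → q < r → r < σ.length →
    σ.getD p 0 = σ.getD r 0 → σ.getD p 0 < σ.getD q 0

namespace List

lemma getD_mem {l : List ℕ} {i : ℕ} (h : i < l.length) : l.getD i 0 ∈ l := by
  rw [getD_eq_getElem _ _ h]
  exact getElem_mem h

lemma getD_append_ne_of_disjoint {u v : List ℕ} (huv : u.Disjoint v) {p r : ℕ}
    (hp : p < u.length) (hr : u.length ≤ r) (hrv : r < (u ++ v).length) :
    (u ++ v).getD p 0 ≠ (u ++ v).getD r 0 := by
  rw [getD_append _ _ _ _ hp, getD_append_right _ _ _ _ hr]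
  rw [length_append] at hrv
  exact fun h => huv (getD_mem hp) (h ▸ getD_mem (by omega))

lemma getD_bracket_succ (b : ℕ) (w : List ℕ) {i : ℕ} (hi : i < w.length) :
    (b :: w ++ [b]).getD (i + 1) 0 = w.getD i 0 := by
  rw [getD_append _ _ _ _ (by simpa using hi), getD_cons_succ]

lemma getD_bracket_last (b : ℕ) (w : List ℕ) : (b :: w ++ [b]).getD (w.length + 1) 0 = b := by
  simp

lemma getD_bracket (b : ℕ) (w : List ℕ) {i : ℕ} (hi : i < w.length + 2) :
    (b :: w ++ [b]).getD i 0 = if i = 0 ∨ i = w.length + 1 then b else w.getD (i - 1) 0 := by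
  rcases i with _ | i
  · simp
  rcases lt_or_ge i w.length with hiw | hiw
  · rw [getD_bracket_succ b w hiw, if_neg (by omega)]
    rfl
  · obtain rfl : i = w.length := by omega
    simp

lemma perm_range'_succ_iff_map_pred {L : List ℕ} (hpos : ∀ y ∈ L, 0 < y) (s n : ℕ) :
    L.Perm (range' (s + 1) n) ↔ (L.map (· - 1)).Perm (range' s n) := by
  constructor
  · intro h
    have := h.map (· - 1)
    rwa [map_sub_range' (Nat.le_add_left 1 s), Nat.add_sub_cancel] at this
  · intro h
    have hL : (L.map (· - 1)).map (1 + ·) = L := by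
      rw [map_map]
      conv_rhs => rw [← map_id L]
      exact map_congr_left fun y hy => by simp only [Function.comp, id]; have := hpos y hy; omega
    have := h.map (1 + ·)
    rwa [hL, map_add_range', add_comm] at this

end List

open List

namespace StirlingCondition

variable {u v w : List ℕ}

lemma of_append (h : StirlingCondition (u ++ v)) : StirlingCondition u ∧ StirlingCondition v := by
  constructor
  · intro p q r hpq hqr hr
    have := h p q r hpq hqr (by simp; omega)
    rwa [getD_append _ _ _ _ (by omega : p < u.length), getD_append _ _ _ _ (by omega : q < _),
      getD_append _ _ _ _ hr] at this
  · intro p q r hpq hqr hr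
    have := h (u.length + p) (u.length + q) (u.length + r) (by omega) (by omega) (by simp; omega)
    simp only [getD_append_right _ _ _ _ (Nat.le_add_right _ _), Nat.add_sub_cancel_left] at this
    exact this

lemma append (huv : u.Disjoint v) (hu : StirlingCondition u) (hv : StirlingCondition v) :
    StirlingCondition (u ++ v) := by
  intro p q r hpq hqr hr heq
  rcases lt_or_ge r u.length with hru | hur
  · rw [getD_append _ _ _ _ (by omega : p < u.length), getD_append _ _ _ _ (by omega : q < _)]
    rw [getD_append _ _ _ _ (by omega : p < u.length), getD_append _ _ _ _ hru] at heq
    exact hu p q r hpq hqr hru heq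
  rcases lt_or_ge p u.length with hpu | hup
  · exact absurd heq (getD_append_ne_of_disjoint huv hpu hur hr)
  rw [getD_append_right _ _ _ _ hup, getD_append_right _ _ _ _ (by omega : u.length ≤ q)]
  rw [getD_append_right _ _ _ _ hup, getD_append_right _ _ _ _ hur] at heq
  rw [length_append] at hr
  exact hv _ _ _ (by omega) (by omega) (by omega) heq

lemma bracket_iff {b : ℕ} :
    StirlingCondition (b :: w ++ [b]) ↔ StirlingCondition w ∧ ∀ x ∈ w, b < x := by
  have hlen : (b :: w ++ [b]).length = w.length + 2 := by simp
  constructor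
  · intro h
    refine ⟨fun p q r hpq hqr hr heq => ?_, fun x hx => ?_⟩
    · have := h (p + 1) (q + 1) (r + 1) (by omega) (by omega) (by omega)
      rw [getD_bracket_succ b w (i := p) (by omega), getD_bracket_succ b w (i := q) (by omega),
        getD_bracket_succ b w hr] at this
      exact this heq
    · obtain ⟨i, hi, rfl⟩ := getElem_of_mem hx
      have := h 0 (i + 1) (w.length + 1) (by omega) (by omega) (by omega)
      rw [getD_bracket_succ b w hi, getD_bracket_last, getD_eq_getElem _ _ hi] at this
      exact this rfl
  · rintro ⟨hw, hbw⟩ p q r hpq hqr hr heq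
    rw [hlen] at hr
    rw [getD_bracket b w (by omega : p < _), getD_bracket b w (by omega : q < _)]
    rw [getD_bracket b w (by omega : p < _), getD_bracket b w hr] at heq
    split_ifs at heq ⊢
    all_goals first
      | omega
      | exact hbw _ (getD_mem (by omega))
      | exact absurd (hbw _ (getD_mem (by omega : r - 1 < w.length))) (by omega)
      | exact absurd (hbw _ (getD_mem (by omega : p - 1 < w.length))) (by omega)
      | exact hw _ _ _ (by omega) (by omega) (by omega) heq

lemma lt_of_mem_of_mem {x y : ℕ} (h : StirlingCondition (u ++ y :: v)) (hu : x ∈ u) (hv : x ∈ v) :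
    x < y := by
  obtain ⟨i, hi, rfl⟩ := getElem_of_mem hu
  obtain ⟨k, hk, hvk⟩ := getElem_of_mem hv
  have := h i u.length (u.length + 1 + k) hi (by omega) (by simp; omega)
  simp only [getD_append _ _ _ _ hi, getD_append_right _ _ _ _ le_rfl,
    getD_append_right _ _ _ _ (by omega : u.length ≤ u.length + 1 + k), Nat.sub_self,
    getD_cons_zero, show u.length + 1 + k - u.length = k + 1 by omega, getD_cons_succ,
    getD_eq_getElem _ _ hi, getD_eq_getElem _ _ hk] at this
  exact this hvk.symm

end StirlingCondition

def IsStirlingWord (σ : List ℕ) : Prop := StirlingCondition σ ∧ ∀ x ∈ σ, σ.count x = 2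

lemma IsStirlingWord.exists_split {b : ℕ} {rest : List ℕ} (h : IsStirlingWord (b :: rest)) :
    ∃ w v, rest = w ++ b :: v ∧ (∀ x ∈ w, b < x) ∧ IsStirlingWord w ∧ IsStirlingWord v := by
  obtain ⟨hst, hcount⟩ := h
  have hb_rest : rest.count b = 1 := by
    have := hcount b mem_cons_self
    rw [count_cons_self] at this
    omega
  obtain ⟨w, v, rfl⟩ := append_of_mem (count_pos_iff.mp (by omega : 0 < rest.count b))
  have hbv : b ∉ v := by
    rw [count_append, count_cons_self] at hb_rest
    exact count_eq_zero.mp (by omega)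
  obtain ⟨hbr, hv⟩ := (show b :: (w ++ b :: v) = b :: w ++ [b] ++ v by simp) ▸ hst |>.of_append
  obtain ⟨hw, hbw⟩ := StirlingCondition.bracket_iff.mp hbr
  have hwv : ∀ x ∈ w, x ∉ v := fun x hxw hxv =>
    (hbw x hxw).not_gt ((show b :: (w ++ b :: v) = (b :: w) ++ b :: v by simp) ▸ hst
      |>.lt_of_mem_of_mem (mem_cons_of_mem b hxw) hxv)
  refine ⟨w, v, rfl, hbw, ⟨hw, fun x hx => ?_⟩, ⟨hv, fun x hx => ?_⟩⟩
  · have := hcount x (by simp [hx])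
    simp only [count_cons, count_append, count_eq_zero_of_not_mem (hwv x hx),
      beq_iff_eq, (hbw x hx).ne, if_false] at this
    simpa using this
  · have hxb : b ≠ x := fun h => hbv (h ▸ hx)
    have := hcount x (by simp [hx])
    simp only [count_cons, count_append, count_eq_zero_of_not_mem fun hxw => hwv x hxw hx,
      beq_iff_eq, hxb, if_false] at this
    simpa using this

lemma IsStirling.isStirlingWord {n : ℕ} {σ : List ℕ} (h : IsStirling n σ) : IsStirlingWord σ := by
  refine ⟨h.2, fun x hx => ?_⟩
  have hx' : x ∈ range' 1 n := by simpa using h.1.subset hx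
  rw [h.1.count_eq, count_append, count_eq_one_of_mem nodup_range' hx']

section Blocks

variable {u v : List ℕ}

lemma isBlockStart_append_iff (huv : u.Disjoint v) {q : ℕ} :
    IsBlockStart (u ++ v) q ↔
      IsBlockStart u q ∨ (u.length ≤ q ∧ IsBlockStart v (q - u.length)) := by
  simp only [IsBlockStart, length_append]
  constructor
  · rintro ⟨hq, hno⟩
    rcases lt_or_ge q u.length with hqu | huq
    · refine Or.inl ⟨hqu, fun ⟨p, r, hpq, hqr, hr, heq⟩ => hno ⟨p, r, hpq, hqr, by omega, ?_⟩⟩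
      rwa [getD_append _ _ _ _ (by omega : p < u.length), getD_append _ _ _ _ hr]
    · refine Or.inr ⟨huq, by omega, fun ⟨p, r, hpq, hqr, hr, heq⟩ => hno
        ⟨u.length + p, u.length + r, by omega, by omega, by omega, ?_⟩⟩
      simp only [getD_append_right _ _ _ _ (Nat.le_add_right _ _), Nat.add_sub_cancel_left, heq]
  · rintro (⟨hqu, hno⟩ | ⟨huq, hqv, hno⟩)
    · refine ⟨by omega, fun ⟨p, r, hpq, hqr, hr, heq⟩ => ?_⟩
      rcases lt_or_ge r u.length with hru | hur
      · rw [getD_append _ _ _ _ (by omega : p < u.length), getD_append _ _ _ _ hru] at heq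
        exact hno ⟨p, r, hpq, hqr, hru, heq⟩
      · exact getD_append_ne_of_disjoint huv (by omega) hur (by simpa using hr) heq
    · refine ⟨by omega, fun ⟨p, r, hpq, hqr, hr, heq⟩ => ?_⟩
      rcases lt_or_ge p u.length with hpu | hup
      · exact getD_append_ne_of_disjoint huv hpu (by omega) (by simpa using hr) heq
      · rw [getD_append_right _ _ _ _ hup, getD_append_right _ _ _ _ (by omega : u.length ≤ r)]
          at heq
        exact hno ⟨p - u.length, r - u.length, by omega, by omega, by omega, heq⟩

lemma blockCount_eq_ncard (σ : List ℕ) : blockCount σ = {q | IsBlockStart σ q}.ncard :=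
  Nat.card_coe_set_eq _

lemma finite_setOf_isBlockStart (σ : List ℕ) : {q | IsBlockStart σ q}.Finite :=
  (Set.finite_Iio σ.length).subset fun _ hq => hq.1

lemma blockCount_nil : blockCount [] = 0 := by
  rw [blockCount_eq_ncard, Set.ncard_eq_zero (finite_setOf_isBlockStart _)]
  exact Set.eq_empty_of_forall_notMem fun q hq => Nat.not_lt_zero q hq.1

lemma blockCount_append (huv : u.Disjoint v) :
    blockCount (u ++ v) = blockCount u + blockCount v := by
  have hset : {q | IsBlockStart (u ++ v) q} =
      {q | IsBlockStart u q} ∪ (u.length + ·) '' {q | IsBlockStart v q} := by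
    ext q
    simp only [Set.mem_ofPred_eq, Set.mem_union, Set.mem_image, isBlockStart_append_iff huv]
    refine or_congr_right ⟨fun ⟨huq, hq⟩ => ⟨q - u.length, hq, by omega⟩, ?_⟩
    rintro ⟨q, hq, rfl⟩
    simpa using hq
  have hdisj : Disjoint {q | IsBlockStart u q} ((u.length + ·) '' {q | IsBlockStart v q}) := by
    refine Set.disjoint_left.mpr ?_
    rintro _ ⟨hq, -⟩ ⟨q, -, rfl⟩
    simp only at hq
    omega
  rw [blockCount_eq_ncard, hset, Set.ncard_union_eq hdisj (finite_setOf_isBlockStart _)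
    ((finite_setOf_isBlockStart _).image _), Set.ncard_image_of_injective _ (add_right_injective _),
    blockCount_eq_ncard, blockCount_eq_ncard]

lemma blockCount_bracket (b : ℕ) (w : List ℕ) : blockCount (b :: w ++ [b]) = 1 := by
  rw [blockCount_eq_ncard, Set.ncard_eq_one]
  refine ⟨0, Set.eq_singleton_iff_unique_mem.mpr ⟨⟨by simp, fun ⟨p, _, hp, _⟩ => by omega⟩, ?_⟩⟩
  rintro q ⟨hq, hno⟩
  by_contra hq0
  exact hno ⟨0, w.length + 1, by omega, by simp at hq; omega, by simp, by simp⟩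

end Blocks

namespace LTree

@[simp] lemma rootLabel_node (a : ℕ) (cs : List LTree) : rootLabel (node a cs) = a := rfl

@[simp] lemma labels_node (a : ℕ) (cs : List LTree) : labels (node a cs) = a :: labelsList cs := by
  rw [labels]

@[simp] lemma labelsList_nil : labelsList [] = [] := by rw [labelsList]

@[simp] lemma labelsList_cons (c : LTree) (cs : List LTree) :
    labelsList (c :: cs) = labels c ++ labelsList cs := by
  rw [labelsList]

lemma mem_labelsList {y : ℕ} {cs : List LTree} : y ∈ labelsList cs ↔ ∃ c ∈ cs, y ∈ labels c := by
  induction cs with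
  | nil => simp
  | cons c cs ih => simp [ih]

lemma rootLabel_mem_labels (t : LTree) : rootLabel t ∈ labels t := by
  cases t
  simp

lemma increasing_node_iff {a : ℕ} {cs : List LTree} :
    Increasing (node a cs) ↔ (∀ c ∈ cs, a < rootLabel c) ∧ ∀ c ∈ cs, Increasing c :=
  ⟨fun ⟨_, _, hlt, hinc⟩ => ⟨hlt, hinc⟩, fun h => .node a cs h.1 h.2⟩

lemma Increasing.rootLabel_le {t : LTree} (h : Increasing t) {y : ℕ} (hy : y ∈ labels t) :
    rootLabel t ≤ y := by
  induction h with
  | node a cs hlt _ ih =>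
    rw [labels_node, mem_cons] at hy
    obtain rfl | hy := hy
    · rfl
    · obtain ⟨c, hc, hyc⟩ := mem_labelsList.mp hy
      exact (hlt c hc).le.trans (ih c hc hyc)

lemma Increasing.lt_of_mem_labelsList {a : ℕ} {cs : List LTree} (h : Increasing (LTree.node a cs))
    {y : ℕ} (hy : y ∈ labelsList cs) : a < y := by
  obtain ⟨c, hc, hyc⟩ := mem_labelsList.mp hy
  exact ((increasing_node_iff.mp h).1 c hc).trans_le
    ((increasing_node_iff.mp h).2 c hc |>.rootLabel_le hyc)

def toWord : List LTree → List ℕ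
  | [] => []
  | node a cs :: rest => (a - 1) :: toWord cs ++ [a - 1] ++ toWord rest
termination_by cs => sizeOf cs

def letters (cs : List LTree) : List ℕ := (labelsList cs).map (· - 1)

@[simp] lemma toWord_nil : toWord [] = [] := by rw [toWord]

lemma toWord_cons (a : ℕ) (cs rest : List LTree) :
    toWord (node a cs :: rest) = (a - 1) :: toWord cs ++ [a - 1] ++ toWord rest := by
  rw [toWord]

@[simp] lemma letters_nil : letters [] = [] := by simp [letters]

@[simp] lemma letters_cons (a : ℕ) (cs rest : List LTree) :
    letters (node a cs :: rest) = (a - 1) :: (letters cs ++ letters rest) := by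
  simp [letters]

lemma count_toWord (cs : List LTree) (x : ℕ) : (toWord cs).count x = 2 * (letters cs).count x := by
  induction cs using toWord.induct with
  | case1 => simp
  | case2 a cs rest ihc ihr =>
    simp only [toWord_cons, letters_cons, count_append, count_cons, count_nil,
      ihc, ihr]
    split_ifs <;> omega

lemma mem_toWord {x : ℕ} {cs : List LTree} : x ∈ toWord cs ↔ x ∈ letters cs := by
  rw [← count_pos_iff, ← count_pos_iff, count_toWord]
  omega

lemma disjoint_toWord_of_nodup {a : ℕ} {cs rest : List LTree}
    (h : (letters (node a cs :: rest)).Nodup) :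
    ((a - 1) :: toWord cs ++ [a - 1]).Disjoint (toWord rest) := by
  simp only [letters_cons, nodup_cons, nodup_append, mem_append, not_or] at h
  intro x hx hxr
  rw [mem_toWord] at hxr
  simp only [cons_append, mem_cons, mem_append, mem_toWord, not_mem_nil,
    or_false] at hx
  rcases hx with rfl | hx | rfl
  · exact h.1.2 hxr
  · exact h.2.2.2 x hx x hxr rfl
  · exact h.1.2 hxr

lemma nodup_letters_of_cons {a : ℕ} {cs rest : List LTree}
    (h : (letters (node a cs :: rest)).Nodup) :
    a - 1 ∉ letters cs ∧ (letters cs).Nodup ∧ (letters rest).Nodup := by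
  simp only [letters_cons, nodup_cons, nodup_append, mem_append, not_or] at h
  exact ⟨h.1.1, h.2.1, h.2.2.1⟩

lemma stirlingCondition_toWord {cs : List LTree} (hnod : (letters cs).Nodup)
    (hinc : ∀ c ∈ cs, Increasing c) : StirlingCondition (toWord cs) := by
  induction cs using toWord.induct with
  | case1 => simp [StirlingCondition]
  | case2 a cs rest ihc ihr =>
    have hinc_a := hinc _ mem_cons_self
    obtain ⟨ha_cs, hnod_cs, hnod_rest⟩ := nodup_letters_of_cons hnod
    have ha_lt : ∀ x ∈ toWord cs, a - 1 < x := by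
      intro x hx
      obtain ⟨y, hy, rfl⟩ := mem_map.mp (mem_toWord.mp hx)
      have hne : a - 1 ≠ y - 1 := fun h => ha_cs (h ▸ mem_map_of_mem hy)
      have := hinc_a.lt_of_mem_labelsList hy
      omega
    rw [toWord_cons]
    refine (StirlingCondition.bracket_iff.mpr ⟨ihc hnod_cs ?_, ha_lt⟩).append
      (disjoint_toWord_of_nodup hnod) (ihr hnod_rest fun c hc => hinc c (mem_cons_of_mem _ hc))
    exact (increasing_node_iff.mp hinc_a).2

lemma blockCount_toWord {cs : List LTree} (hnod : (letters cs).Nodup) :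
    blockCount (toWord cs) = cs.length := by
  induction cs using toWord.induct with
  | case1 => simp [blockCount_nil]
  | case2 a cs rest _ ihr =>
    rw [toWord_cons, blockCount_append (disjoint_toWord_of_nodup hnod), blockCount_bracket,
      ihr (nodup_letters_of_cons hnod).2.2, length_cons, add_comm]

def ofWord : List ℕ → List LTree
  | [] => []
  | b :: rest =>
      node (b + 1) (ofWord (rest.take (rest.idxOf b))) :: ofWord (rest.drop (rest.idxOf b + 1))
termination_by σ => σ.length

@[simp] lemma ofWord_nil : ofWord [] = [] := by rw [ofWord]

lemma ofWord_cons_append {b : ℕ} {w v : List ℕ} (hb : b ∉ w) :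
    ofWord (b :: w ++ b :: v) = node (b + 1) (ofWord w) :: ofWord v := by
  rw [cons_append, ofWord, idxOf_append_of_notMem hb, idxOf_cons_self, add_zero,
    take_left]
  simp

lemma ofWord_toWord {cs : List LTree} (hnod : (letters cs).Nodup)
    (hpos : ∀ y ∈ labelsList cs, 0 < y) : ofWord (toWord cs) = cs := by
  induction cs using toWord.induct with
  | case1 => simp
  | case2 a cs rest ihc ihr =>
    obtain ⟨ha_cs, hnod_cs, hnod_rest⟩ := nodup_letters_of_cons hnod
    have ha : 0 < a := hpos a (by simp)
    have hb : a - 1 ∉ toWord cs := mt mem_toWord.mp ha_cs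
    rw [toWord_cons, append_assoc, singleton_append, ofWord_cons_append hb,
      ihc hnod_cs fun y hy => hpos y (by simp [hy]), ihr hnod_rest fun y hy => hpos y (by simp [hy]),
      Nat.sub_add_cancel ha]

lemma pos_of_mem_labelsList_ofWord {σ : List ℕ} {y : ℕ} (hy : y ∈ labelsList (ofWord σ)) :
    0 < y := by
  induction σ using ofWord.induct with
  | case1 => simp at hy
  | case2 b rest ihw ihv =>
    rw [ofWord, labelsList_cons, labels_node] at hy
    simp only [mem_append, mem_cons] at hy
    rcases hy with (rfl | hy) | hy
    · omega
    · exact ihw hy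
    · exact ihv hy

lemma toWord_ofWord {σ : List ℕ} (h : IsStirlingWord σ) : toWord (ofWord σ) = σ := by
  match σ, h with
  | [], _ => simp
  | b :: _, h =>
    obtain ⟨w, v, hrest, hbw, hw, hv⟩ := h.exists_split
    rw [hrest, ← cons_append, ofWord_cons_append fun hb => (hbw b hb).false, toWord_cons,
      toWord_ofWord hw, toWord_ofWord hv, Nat.add_sub_cancel]
    simp
termination_by σ.length
decreasing_by all_goals simp only [hrest, length_cons, length_append]; omega

lemma increasing_of_mem_ofWord {σ : List ℕ} (h : IsStirlingWord σ) :
    ∀ t ∈ ofWord σ, Increasing t := by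
  match σ, h with
  | [], _ => simp
  | b :: _, h =>
    obtain ⟨w, v, hrest, hbw, hw, hv⟩ := h.exists_split
    rw [hrest, ← cons_append, ofWord_cons_append fun hb => (hbw b hb).false]
    intro t ht
    rcases mem_cons.mp ht with rfl | ht
    · refine increasing_node_iff.mpr ⟨fun c hc => ?_, increasing_of_mem_ofWord hw⟩
      have hmem : rootLabel c - 1 ∈ letters (ofWord w) :=
        mem_map_of_mem (mem_labelsList.mpr ⟨c, hc, rootLabel_mem_labels c⟩)
      rw [← mem_toWord, toWord_ofWord hw] at hmem
      have := hbw _ hmem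
      omega
    · exact increasing_of_mem_ofWord hv t ht
termination_by σ.length
decreasing_by all_goals simp only [hrest, length_cons, length_append]; omega

variable {n : ℕ}

lemma perm_toWord_iff {cs : List LTree} (R : List ℕ) :
    (toWord cs).Perm (R ++ R) ↔ (letters cs).Perm R := by
  simp only [perm_iff_count, count_append, count_toWord]
  exact forall_congr' fun x => by omega

lemma isLPT_node_one_iff {cs : List LTree} (hpos : ∀ y ∈ labelsList cs, 0 < y) :
    IsLPT n (node 1 cs) ↔ (letters cs).Perm (range' 1 n) := by
  rw [IsLPT, labels_node, range'_succ, perm_cons, letters, ← perm_range'_succ_iff_map_pred hpos]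

lemma rootLabel_eq_one {T : LTree} (hL : IsLPT n T) (hI : Increasing T) : rootLabel T = 1 := by
  have hroot : rootLabel T ∈ range' 1 (n + 1) := hL.subset (rootLabel_mem_labels T)
  have hone : 1 ∈ labels T := hL.symm.subset (by simp)
  have := hI.rootLabel_le hone
  simp only [mem_range'_1] at hroot
  omega

lemma perm_letters_children {T : LTree} (hL : IsLPT n T) (hI : Increasing T) :
    (letters T.children).Perm (range' 1 n) := by
  obtain ⟨a, cs⟩ := T
  obtain rfl : a = 1 := rootLabel_eq_one hL hI
  exact (isLPT_node_one_iff fun y hy => (hI.lt_of_mem_labelsList hy).trans' one_pos).mp hL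

lemma isStirling_toWord_children {T : LTree} (hL : IsLPT n T) (hI : Increasing T) :
    IsStirling n (toWord T.children) := by
  have hperm := perm_letters_children hL hI
  obtain ⟨a, cs⟩ := T
  exact ⟨(perm_toWord_iff _).mpr hperm,
    stirlingCondition_toWord (hperm.nodup_iff.mpr nodup_range') (increasing_node_iff.mp hI).2⟩

variable {σ : List ℕ}

lemma perm_letters_ofWord (h : IsStirling n σ) : (letters (ofWord σ)).Perm (range' 1 n) :=
  (perm_toWord_iff _).mp ((toWord_ofWord h.isStirlingWord).symm ▸ h.1)

lemma isLPT_node_one_ofWord (h : IsStirling n σ) : IsLPT n (node 1 (ofWord σ)) :=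
  (isLPT_node_one_iff fun _ => pos_of_mem_labelsList_ofWord).mpr (perm_letters_ofWord h)

lemma increasing_node_one_ofWord (h : IsStirling n σ) : Increasing (node 1 (ofWord σ)) := by
  refine increasing_node_iff.mpr ⟨fun c hc => ?_, increasing_of_mem_ofWord h.isStirlingWord⟩
  have hmem : rootLabel c - 1 ∈ range' 1 n := (perm_letters_ofWord h).subset
    (mem_map_of_mem (mem_labelsList.mpr ⟨c, hc, rootLabel_mem_labels c⟩))
  simp only [mem_range'_1] at hmem
  omega

lemma length_ofWord (h : IsStirling n σ) : (ofWord σ).length = blockCount σ := by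
  conv_rhs => rw [← toWord_ofWord h.isStirlingWord]
  exact (blockCount_toWord ((perm_letters_ofWord h).nodup_iff.mpr nodup_range')).symm

def increasingEquivStirling (n r : ℕ) :
    {T : LTree // IsLPT n T ∧ Increasing T ∧ rootDeg T = r} ≃
      {σ : List ℕ // IsStirling n σ ∧ blockCount σ = r} where
  toFun T := ⟨toWord T.1.children, isStirling_toWord_children T.2.1 T.2.2.1, by
    rw [blockCount_toWord ((perm_letters_children T.2.1 T.2.2.1).nodup_iff.mpr nodup_range')]
    exact T.2.2.2⟩
  invFun σ := ⟨node 1 (ofWord σ.1), isLPT_node_one_ofWord σ.2.1, increasing_node_one_ofWord σ.2.1,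
    (length_ofWord σ.2.1).trans σ.2.2⟩
  left_inv := by
    rintro ⟨⟨a, cs⟩, hL, hI, -⟩
    obtain rfl : a = 1 := rootLabel_eq_one hL hI
    refine Subtype.ext (congrArg (node 1) (ofWord_toWord ?_ fun y hy => ?_))
    · exact (perm_letters_children hL hI).nodup_iff.mpr nodup_range'
    · exact (hI.lt_of_mem_labelsList hy).trans' one_pos
  right_inv σ := Subtype.ext (toWord_ofWord σ.2.1.isStirlingWord)

end LTree

/-- For every `n ≥ 1` and `1 ≤ r ≤ n`, the number of increasing plane trees with
`n` edges whose root has exactly `r` children equals the number of Stirling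
permutations of `{1,1,2,2,…,n,n}` having exactly `r` blocks. -/
theorem card_increasing_eq_card_stirling (n r : ℕ) (hn : 1 ≤ n) (hr1 : 1 ≤ r) (hrn : r ≤ n) :
    Nat.card {T : LTree // LTree.IsLPT n T ∧ LTree.Increasing T ∧ LTree.rootDeg T = r}
      = Nat.card {σ : List ℕ // IsStirling n σ ∧ blockCount σ = r} :=
  Nat.card_congr (LTree.increasingEquivStirling n r)
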